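/- arXiv:2201.00389 — 2 statements merged into one kernel-verified Lean document; each statement's English description precedes it below -/
import Mathlib

section
/- Let G be a finite simple graph of order p, and let F be a field with char F ≠ 2 such that either char F = 0 or p < 2 + char F. Then a function λ : V(G) → F is a short functional on G over F if and only if there exist an edge of G with endpoints a and b and a nonzero scalar c ∈ F such that λ(a) = λ(b) = c and λ(x) = 0 for every vertex x other than a and b. -/
/-- `edgeVal u e` is the sum of the values of `u` at the two endpoints of `e`,
written `λ_e(u)` in the paper. -/
def edgeVal {V F : Type*} [Field F] (u : V → F) : Sym2 V → F :=
  Sym2.lift ⟨fun x y => u x + u y, fun x y => add_comm _ _⟩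

/-- A short functional on `G` over `F`. -/
def IsShortFunctional {V F : Type*} [Fintype V] [DecidableEq V] [Field F]
    (G : SimpleGraph V) [DecidableRel G.Adj] (lam : V → F) : Prop :=
  lam ≠ 0 ∧
    (∀ x y : V, x ≠ y → ¬ G.Adj x y → lam x = 0 ∨ lam y = 0) ∧
    (∀ x : V, lam x ≠ 0 → lam x = ∑ t ∈ G.neighborFinset x, lam t)

theorem short_functionals_are_edge_functionals
    {V F : Type*} [Fintype V] [DecidableEq V] [Field F]
    (G : SimpleGraph V) [DecidableRel G.Adj]
    (hchar2 : ringChar F ≠ 2)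
    (hchar : ringChar F = 0 ∨ Fintype.card V < 2 + ringChar F)
    (lam : V → F) :
    IsShortFunctional G lam ↔
      ∃ (a b : V) (c : F), G.Adj a b ∧ c ≠ 0 ∧ lam a = c ∧ lam b = c ∧
        ∀ x : V, x ≠ a → x ≠ b → lam x = 0 := by
  classical
  have two_ne : (2 : F) ≠ 0 := Ring.two_ne_zero hchar2
  constructor
  · rintro ⟨hne, hcl, hsum⟩
    set S : Finset V := Finset.univ.filter (fun x => lam x ≠ 0) with hS
    have hmemS : ∀ x, x ∈ S ↔ lam x ≠ 0 := by
      intro x; simp [hS]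
    set T : F := ∑ x ∈ S, lam x with hT
    have hkey : ∀ x ∈ S, lam x + lam x = T := by
      intro x hx
      have hx' : lam x ≠ 0 := (hmemS x).1 hx
      have h1 : (G.neighborFinset x).filter (fun t => lam t ≠ 0) = S.erase x := by
        ext t
        simp only [Finset.mem_filter, Finset.mem_erase, SimpleGraph.mem_neighborFinset,
          hmemS, Finset.mem_univ, true_and]
        constructor
        · rintro ⟨hadj, hne⟩
          exact ⟨(G.ne_of_adj hadj).symm, hne⟩
        · rintro ⟨htx, hne⟩
          refine ⟨?_, hne⟩
          by_contra hnadj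
          rcases hcl x t (Ne.symm htx) hnadj with h | h
          · exact hx' h
          · exact hne h
      have h2 : ∑ t ∈ G.neighborFinset x, lam t = ∑ t ∈ S.erase x, lam t := by
        rw [← Finset.sum_filter_ne_zero, h1]
      have h3 : lam x + ∑ t ∈ S.erase x, lam t = T := Finset.add_sum_erase S lam hx
      have h4 : lam x = ∑ t ∈ S.erase x, lam t := (hsum x hx').trans h2
      linear_combination h3 + h4
    have hconst : ∀ x ∈ S, ∀ y ∈ S, lam x = lam y := by
      intro x hx y hy
      have h2 : (2 : F) * lam x = (2 : F) * lam y := by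
        have := hkey x hx
        have := hkey y hy
        ring_nf
        linear_combination hkey x hx - hkey y hy
      exact mul_left_cancel₀ two_ne h2
    obtain ⟨x₀, hx₀⟩ : ∃ x, lam x ≠ 0 := Function.ne_iff.mp hne
    have hx₀S : x₀ ∈ S := (hmemS x₀).2 hx₀
    have hTcard : T = (S.card : F) * lam x₀ := by
      rw [hT]
      rw [Finset.sum_congr rfl (fun y hy => hconst y hy x₀ hx₀S), Finset.sum_const,
        nsmul_eq_mul]
    have hcast : ((S.card : ℕ) : F) = ((2 : ℕ) : F) := by
      have h := hkey x₀ hx₀S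
      rw [hTcard] at h
      have h2 : (S.card : F) * lam x₀ = (2 : F) * lam x₀ := by linear_combination -h
      have h3 := mul_right_cancel₀ hx₀ h2
      exact_mod_cast h3
    have hcard : S.card = 2 := by
      rcases CharP.char_is_prime_or_zero F (ringChar F) with hp | h0
      · have hcardV : Fintype.card V < 2 + ringChar F := by
          rcases hchar with h | h
          · rw [h] at hp; exact absurd hp (by norm_num)
          · exact h
        have hSle : S.card ≤ Fintype.card V := by
          simpa using Finset.card_le_card (Finset.subset_univ S)
        haveI : CharP F (ringChar F) := ringChar.charP F
        have hmod : S.card ≡ 2 [MOD ringChar F] :=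
          (CharP.natCast_eq_natCast F (ringChar F)).mp hcast
        have hp2 : 2 ≤ ringChar F := hp.two_le
        have hp3 : 3 ≤ ringChar F := by omega
        have hmod' : S.card % ringChar F = 2 := by
          have h22 : (2 : ℕ) % ringChar F = 2 := Nat.mod_eq_of_lt (by omega)
          unfold Nat.ModEq at hmod
          omega
        obtain ⟨q, hq⟩ : ∃ q, S.card = ringChar F * q + 2 := by
          have hdm := Nat.div_add_mod S.card (ringChar F)
          rw [hmod'] at hdm
          exact ⟨S.card / ringChar F, hdm.symm⟩
        have hq0 : q = 0 := by
          by_contra h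
          have h1 : 1 ≤ q := Nat.one_le_iff_ne_zero.mpr h
          have h2 : ringChar F * 1 ≤ ringChar F * q := Nat.mul_le_mul_left _ h1
          rw [mul_one] at h2
          omega
        subst hq0
        simpa using hq
      · haveI : CharP F 0 := h0 ▸ ringChar.charP F
        haveI : CharZero F := CharP.charP_to_charZero F
        exact Nat.cast_injective hcast
    obtain ⟨a, b, hab, hSab⟩ := Finset.card_eq_two.mp hcard
    have haS : a ∈ S := by rw [hSab]; simp
    have hbS : b ∈ S := by rw [hSab]; simp
    have hla : lam a ≠ 0 := (hmemS a).1 haS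
    have hlb : lam b ≠ 0 := (hmemS b).1 hbS
    have hadj : G.Adj a b := by
      by_contra hnadj
      rcases hcl a b hab hnadj with h | h
      · exact hla h
      · exact hlb h
    refine ⟨a, b, lam a, hadj, hla, rfl, (hconst b hbS a haS), ?_⟩
    intro x hxa hxb
    by_contra hx
    have : x ∈ S := (hmemS x).2 hx
    rw [hSab] at this
    simp only [Finset.mem_insert, Finset.mem_singleton] at this
    tauto
  · rintro ⟨a, b, c, hadj, hc, ha, hb, h0⟩
    have hab : a ≠ b := G.ne_of_adj hadj
    refine ⟨?_, ?_, ?_⟩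
    · intro h
      apply hc
      rw [← ha]
      exact congrFun h a
    · intro x y hxy hnadj
      by_contra hcon
      push_neg at hcon
      obtain ⟨hx, hy⟩ := hcon
      have hx' : x = a ∨ x = b := by
        by_contra h; push_neg at h; exact hx (h0 x h.1 h.2)
      have hy' : y = a ∨ y = b := by
        by_contra h; push_neg at h; exact hy (h0 y h.1 h.2)
      rcases hx' with rfl | rfl <;> rcases hy' with rfl | rfl
      · exact hxy rfl
      · exact hnadj hadj
      · exact hnadj hadj.symm
      · exact hxy rfl
    · intro x hx
      have hx' : x = a ∨ x = b := by
        by_contra h; push_neg at h; exact hx (h0 x h.1 h.2)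
      rcases hx' with h | h <;> rw [h]
      · have hbmem : b ∈ G.neighborFinset a := by
          rw [SimpleGraph.mem_neighborFinset]; exact hadj
        rw [Finset.sum_eq_single_of_mem b hbmem]
        · rw [ha, hb]
        · intro t ht htb
          have hta : t ≠ a := by
            rw [SimpleGraph.mem_neighborFinset] at ht
            exact (G.ne_of_adj ht).symm
          exact h0 t hta htb
      · have hamem : a ∈ G.neighborFinset b := by
          rw [SimpleGraph.mem_neighborFinset]; exact hadj.symm
        rw [Finset.sum_eq_single_of_mem a hamem]
        · rw [ha, hb]
        · intro t ht hta
          have htb : t ≠ b := by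
            rw [SimpleGraph.mem_neighborFinset] at ht
            exact (G.ne_of_adj ht).symm
          exact h0 t hta htb
end

section
/- Let F be a field with char F ≠ 2, let p ≥ 3, and suppose λ : {1, …, p} → F, μ₀ ∈ F, and μ : {1, …, p} → F satisfy λ(i)·λ(j) = μ₀ + δ_{ij}·μ(i) for all 1 ≤ i, j ≤ p (δ_{ij} the Kronecker delta), with λ not identically zero. Then there exists a nonzero c ∈ F such that either (type 0) λ(i) = c for all i, μ₀ = c², and μ(i) = 0 for all i; or (type i) there is an index i with λ(j) = c·δ_{ij} for all j, μ₀ = 0, and μ(j) = c²·δ_{ij} for all j. -/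
theorem short_homomorphisms_of_Tp
    {F : Type*} [Field F] (hchar2 : ringChar F ≠ 2)
    (p : ℕ) (hp : 3 ≤ p)
    (lam : Fin p → F) (mu0 : F) (mu : Fin p → F)
    (hrel : ∀ i j : Fin p, lam i * lam j = mu0 + if i = j then mu i else 0)
    (hlam : lam ≠ 0) :
    ∃ c : F, c ≠ 0 ∧
      (((∀ i, lam i = c) ∧ mu0 = c ^ 2 ∧ ∀ i, mu i = 0) ∨
        (∃ i : Fin p, (∀ j, lam j = if i = j then c else 0) ∧ mu0 = 0 ∧
          ∀ j, mu j = if i = j then c ^ 2 else 0)) := by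
  -- pick i with lam i ≠ 0
  obtain ⟨i, hi⟩ : ∃ i, lam i ≠ 0 := by
    by_contra h
    push_neg at h
    exact hlam (funext h)
  -- a third index distinct from any two
  have third : ∀ a b : Fin p, ∃ k : Fin p, k ≠ a ∧ k ≠ b := by
    intro a b
    by_contra h
    push_neg at h
    have hsub : (Finset.univ : Finset (Fin p)) ⊆ {a, b} := by
      intro k _
      rcases eq_or_ne k a with rfl | hk
      · simp
      · simp [h k hk]
    have := Finset.card_le_card hsub
    have hcard : ({a, b} : Finset (Fin p)).card ≤ 2 :=
      Finset.card_insert_le _ _ |>.trans (by simp)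
    simp [Finset.card_univ] at this
    omega
  by_cases hj : ∃ j, j ≠ i ∧ lam j ≠ 0
  · -- type 0: all values equal
    obtain ⟨j, hji, hjne⟩ := hj
    obtain ⟨k, hki, hkj⟩ := third i j
    have hij : lam i * lam j = mu0 := by
      have := hrel i j; simpa [Ne.symm hji] using this
    have hik : lam i * lam k = mu0 := by
      have := hrel i k; simpa [Ne.symm hki] using this
    have hjk : lam j * lam k = mu0 := by
      have := hrel j k; simpa [Ne.symm hkj] using this
    have hmu0ne : mu0 ≠ 0 := hij ▸ mul_ne_zero hi hjne
    have hkne : lam k ≠ 0 := fun h => hmu0ne (by rw [← hik, h, mul_zero])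
    have hij2 : lam i = lam j := mul_right_cancel₀ hkne (hik.trans hjk.symm)
    have hall : ∀ m, lam m = lam i := by
      intro m
      rcases eq_or_ne m i with rfl | hm
      · rfl
      · have him : lam i * lam m = mu0 := by
          have := hrel i m; simpa [Ne.symm hm] using this
        have : lam i * lam m = lam i * lam i := by rw [him, ← hij, ← hij2]
        exact mul_left_cancel₀ hi this
    have hmu0 : mu0 = lam i ^ 2 := by rw [← hij, ← hij2, sq]
    refine ⟨lam i, hi, Or.inl ⟨hall, hmu0, ?_⟩⟩
    intro m
    have := hrel m m
    simp [hall m, hmu0, sq] at this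
    exact this
  · -- type i: only lam i nonzero
    push_neg at hj
    obtain ⟨k, hki, _⟩ := third i i
    have hk0 : lam k = 0 := hj k hki
    have hmu0 : mu0 = 0 := by
      have := hrel i k
      simp [Ne.symm hki, hk0] at this
      exact this.symm
    refine ⟨lam i, hi, Or.inr ⟨i, ?_, hmu0, ?_⟩⟩
    · intro j
      rcases eq_or_ne i j with rfl | h
      · simp
      · simp [h, hj j (Ne.symm h)]
    · intro j
      rcases eq_or_ne i j with rfl | h
      · have := hrel i i
        simp [hmu0] at this
        simp [this, sq]
      · have := hrel j j
        simp [hj j (Ne.symm h), hmu0] at this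
        simp [h, this.symm]
end
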